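/- arXiv:1805.02215 — 5 statements merged into one kernel-verified Lean document; each statement's English description precedes it below -/
import Mathlib

section
/- Let b be a real number with 0 ≤ b ≤ 2 − √3. Then for all real θ, the function γ(θ) = 1/(1+b) + 1/(1−b) − 1 + (2/(1+b) − 2/(1−b))·cos(2θ) is nonnegative. -/
theorem stmt_0 (b : ℝ) (hb0 : 0 ≤ b) (hb1 : b ≤ 2 - Real.sqrt 3) (θ : ℝ) :
    0 ≤ 1 / (1 + b) + 1 / (1 - b) - 1 +
        (2 / (1 + b) - 2 / (1 - b)) * Real.cos (2 * θ) := by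
  have hs : Real.sqrt 3 ^ 2 = 3 := Real.sq_sqrt (by norm_num)
  have hs1 : (1:ℝ) ≤ Real.sqrt 3 := by nlinarith [Real.sqrt_nonneg 3]
  have hblt : b < 1 := by nlinarith
  have h1 : (0:ℝ) < 1 + b := by linarith
  have h2 : (0:ℝ) < 1 - b := by linarith
  have hquad : 0 ≤ b ^ 2 - 4 * b + 1 := by nlinarith [Real.sqrt_nonneg 3]
  have hc1 : Real.cos (2 * θ) ≤ 1 := Real.cos_le_one _
  have hc2 : -1 ≤ Real.cos (2 * θ) := Real.neg_one_le_cos _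
  have hN : 0 ≤ 1 + b ^ 2 - 4 * b * Real.cos (2 * θ) := by nlinarith
  have heq : 1 / (1 + b) + 1 / (1 - b) - 1 +
      (2 / (1 + b) - 2 / (1 - b)) * Real.cos (2 * θ)
      = (1 + b ^ 2 - 4 * b * Real.cos (2 * θ)) / ((1 + b) * (1 - b)) := by
    field_simp
    ring
  rw [heq]
  exact div_nonneg hN (mul_pos h1 h2).le
end

section
/- Let (ξ_k) be defined by ξ₀ = 1, ξ₁ = d₁, ξ_k = d_k ξ_{k−1} − γ₂² ξ_{k−2} for k ≥ 2, where d₁ = γ₀+γ₂+1 and d_k = γ₀+2k−1 for k ≥ 2, with γ₀ > 0, γ₀ ≥ 2|γ₂|, and γ₀+γ₂+1 > 0. Then ξ_k > 0 for all k ≥ 0; in particular the leading principal minors of the tridiagonal matrix A_N are all positive, so A_N is positive definite. -/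
/-!
The recurrence preserves the invariant `0 < ξ k ∧ |γ₂| ξ k < ξ (k + 1)`: since
`γ₂² ξ k ≤ |γ₂| ξ (k + 1)`, we get `ξ (k + 2) ≥ (d - |γ₂|) ξ (k + 1)` with `d - |γ₂| > |γ₂|`.

For `A_N`, the hypothesis `2 |γ₂| ≤ γ₀` makes every row strictly diagonally dominant with positive
diagonal, so by Gershgorin's circle theorem every (real) eigenvalue of the symmetric matrix `A_N`
is positive.
-/

open Finset
open scoped ComplexOrder

theorem Matrix.IsHermitian.hasEigenvalue_eigenvalues {𝕜 n : Type*} [RCLike 𝕜] [Fintype n]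
    [DecidableEq n] {A : Matrix n n 𝕜} (hA : A.IsHermitian) (i : n) :
    Module.End.HasEigenvalue (Matrix.toLin' A) (hA.eigenvalues i : 𝕜) := by
  refine Module.End.hasEigenvalue_of_hasEigenvector
    ⟨Module.End.mem_eigenspace_iff.2 ?_,
      (WithLp.ofLp_eq_zero 2).ne.2 <| hA.eigenvectorBasis.orthonormal.ne_zero i⟩
  rw [Matrix.toLin'_apply, hA.mulVec_eigenvectorBasis i, RCLike.real_smul_eq_coe_smul (K := 𝕜)]

theorem Matrix.IsHermitian.posDef_of_sum_norm_lt_re_diag {𝕜 n : Type*} [RCLike 𝕜] [Fintype n]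
    [DecidableEq n] {A : Matrix n n 𝕜} (hA : A.IsHermitian)
    (h : ∀ k, ∑ j ∈ univ.erase k, ‖A k j‖ < RCLike.re (A k k)) : A.PosDef := by
  refine hA.posDef_iff_eigenvalues_pos.2 fun i => ?_
  obtain ⟨k, hk⟩ := eigenvalue_mem_ball (hA.hasEigenvalue_eigenvalues i)
  rw [Metric.mem_closedBall, dist_comm, dist_eq_norm] at hk
  have hre := (RCLike.re_le_norm (A k k - hA.eigenvalues i)).trans hk
  rw [map_sub, RCLike.ofReal_re] at hre
  linarith [h k]

theorem pos_and_abs_mul_lt_succ_of_recurrence {ξ d : ℕ → ℝ} {c : ℝ} (hξ0 : 0 < ξ 0)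
    (hξ1 : |c| * ξ 0 < ξ 1) (hd : ∀ k, 2 * |c| < d k)
    (hrec : ∀ k, ξ (k + 2) = d k * ξ (k + 1) - c ^ 2 * ξ k) (k : ℕ) :
    0 < ξ k ∧ |c| * ξ k < ξ (k + 1) := by
  induction k with
  | zero => exact ⟨hξ0, hξ1⟩
  | succ k ih =>
    obtain ⟨hk, hk1⟩ := ih
    have hpos : 0 < ξ (k + 1) := (mul_nonneg (abs_nonneg c) hk.le).trans_lt hk1
    have hsq : c ^ 2 * ξ k ≤ |c| * ξ (k + 1) := by
      rw [← sq_abs, sq, mul_assoc]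
      exact mul_le_mul_of_nonneg_left hk1.le (abs_nonneg c)
    refine ⟨hpos, ?_⟩
    rw [hrec k]
    nlinarith [hd k]

theorem pos_of_recurrence {ξ d : ℕ → ℝ} {c : ℝ} (hξ0 : 0 < ξ 0)
    (hξ1 : |c| * ξ 0 < ξ 1) (hd : ∀ k, 2 * |c| < d k)
    (hrec : ∀ k, ξ (k + 2) = d k * ξ (k + 1) - c ^ 2 * ξ k) (k : ℕ) : 0 < ξ k :=
  (pos_and_abs_mul_lt_succ_of_recurrence hξ0 hξ1 hd hrec k).1

theorem sum_ite_val_eq_le {N : ℕ} (m : ℕ) {c : ℝ} (hc : 0 ≤ c) :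
    ∑ j : Fin N, (if (j : ℕ) = m then c else 0) ≤ c := by
  rw [sum_ite, sum_const_zero, add_zero, sum_const, nsmul_eq_mul]
  have hcard : #{j : Fin N | (j : ℕ) = m} ≤ 1 := card_le_one.2 fun a ha b hb =>
    Fin.ext <| (mem_filter.1 ha).2.trans (mem_filter.1 hb).2.symm
  exact mul_le_of_le_one_left hc (by exact_mod_cast hcard)

/-- The matrix `A_N` with rows indexed from `0`, so that row `i` carries `d_{i+1}`. -/
def tridiagMatrix (γ₀ γ₂ : ℝ) (N : ℕ) : Matrix (Fin N) (Fin N) ℝ :=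
  Matrix.of fun i j : Fin N =>
    if i = j then (if (i : ℕ) = 0 then γ₀ + γ₂ + 1 else γ₀ + 2 * (i : ℕ) + 1)
    else if (i : ℕ) + 1 = (j : ℕ) ∨ (j : ℕ) + 1 = (i : ℕ) then γ₂ else 0

theorem tridiagMatrix_isHermitian (γ₀ γ₂ : ℝ) (N : ℕ) : (tridiagMatrix γ₀ γ₂ N).IsHermitian := by
  refine Matrix.IsHermitian.ext fun i j => ?_
  rcases eq_or_ne i j with rfl | hij
  · rfl
  · simp only [tridiagMatrix, Matrix.of_apply, star_trivial, if_neg hij, if_neg hij.symm, or_comm]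

theorem sum_abs_offDiag_tridiagMatrix_le (γ₀ γ₂ : ℝ) {N : ℕ} (k : Fin N) :
    ∑ j ∈ univ.erase k, |tridiagMatrix γ₀ γ₂ N k j| ≤
      |γ₂| + if (k : ℕ) = 0 then 0 else |γ₂| := by
  have hterm : ∀ j ∈ univ.erase k, |tridiagMatrix γ₀ γ₂ N k j| ≤
      (if (j : ℕ) = k + 1 then |γ₂| else 0) +
        (if (j : ℕ) = k - 1 ∧ (k : ℕ) ≠ 0 then |γ₂| else 0) := by
    intro j hj
    have hkj : k ≠ j := (ne_of_mem_erase hj).symm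
    simp only [tridiagMatrix, Matrix.of_apply, if_neg hkj]
    split_ifs <;> simp_all
    omega
  calc ∑ j ∈ univ.erase k, |tridiagMatrix γ₀ γ₂ N k j|
      ≤ ∑ j : Fin N, ((if (j : ℕ) = k + 1 then |γ₂| else 0) +
          (if (j : ℕ) = k - 1 ∧ (k : ℕ) ≠ 0 then |γ₂| else 0)) :=
        (sum_le_sum hterm).trans (sum_le_sum_of_subset_of_nonneg (subset_univ _)
          fun _ _ _ => by positivity)
    _ ≤ _ := by
      rw [sum_add_distrib]
      refine add_le_add (sum_ite_val_eq_le _ (abs_nonneg _)) ?_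
      split_ifs with hk
      · simp [hk]
      · simpa only [hk, ne_eq, not_false_eq_true, and_true] using
          sum_ite_val_eq_le ((k : ℕ) - 1) (abs_nonneg γ₂)

theorem tridiagMatrix_posDef {γ₀ γ₂ : ℝ} (h2 : 2 * |γ₂| ≤ γ₀) (N : ℕ) :
    (tridiagMatrix γ₀ γ₂ N).PosDef := by
  refine (tridiagMatrix_isHermitian γ₀ γ₂ N).posDef_of_sum_norm_lt_re_diag fun k => ?_
  refine (sum_abs_offDiag_tridiagMatrix_le γ₀ γ₂ k).trans_lt ?_
  simp only [tridiagMatrix, Matrix.of_apply, if_true, RCLike.re_to_real]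
  split_ifs
  · linarith [neg_abs_le γ₂]
  · linarith [(k : ℕ).cast_nonneg (α := ℝ)]

theorem stmt_10_general (γ₀ γ₂ : ℝ) (h2 : 2 * |γ₂| ≤ γ₀)
    (ξ : ℕ → ℝ) (hξ0 : ξ 0 = 1) (hξ1 : ξ 1 = γ₀ + γ₂ + 1)
    (hrec : ∀ k : ℕ, 2 ≤ k → ξ k = (γ₀ + 2 * k - 1) * ξ (k - 1) - γ₂ ^ 2 * ξ (k - 2)) :
    (∀ k : ℕ, 0 < ξ k) ∧
    ∀ N : ℕ, 0 < N →
      (Matrix.of fun i j : Fin N =>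
        if i = j then (if (i : ℕ) = 0 then γ₀ + γ₂ + 1 else γ₀ + 2 * (i : ℕ) + 1)
        else if (i : ℕ) + 1 = (j : ℕ) ∨ (j : ℕ) + 1 = (i : ℕ) then γ₂ else 0).PosDef := by
  refine ⟨pos_of_recurrence (d := fun k => γ₀ + 2 * ((k + 2 : ℕ) : ℝ) - 1) (c := γ₂)
    (by simp [hξ0]) ?_ (fun k => ?_) (fun k => hrec (k + 2) (by omega)),
    fun N _ => tridiagMatrix_posDef h2 N⟩
  · rw [hξ0, hξ1]
    linarith [neg_abs_le γ₂]
  · push_cast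
    linarith [Nat.cast_nonneg (α := ℝ) k]

theorem stmt_10 (γ₀ γ₂ : ℝ) (h0 : 0 < γ₀) (h2 : 2 * |γ₂| ≤ γ₀) (h1 : 0 < γ₀ + γ₂ + 1)
    (ξ : ℕ → ℝ) (hξ0 : ξ 0 = 1) (hξ1 : ξ 1 = γ₀ + γ₂ + 1)
    (hrec : ∀ k : ℕ, 2 ≤ k → ξ k = (γ₀ + 2 * k - 1) * ξ (k - 1) - γ₂ ^ 2 * ξ (k - 2)) :
    (∀ k : ℕ, 0 < ξ k) ∧
    ∀ N : ℕ, 0 < N →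
      (Matrix.of fun i j : Fin N =>
        if i = j then (if (i : ℕ) = 0 then γ₀ + γ₂ + 1 else γ₀ + 2 * (i : ℕ) + 1)
        else if (i : ℕ) + 1 = (j : ℕ) ∨ (j : ℕ) + 1 = (i : ℕ) then γ₂ else 0).PosDef :=
  stmt_10_general γ₀ γ₂ h2 ξ hξ0 hξ1 hrec
end

section
/- Let B be an infinite tridiagonal operator on ℓ²(ℕ) with diagonal entries b₁ = γ₀−γ₂+1 and b_n = γ₀+2n−1 for n ≥ 2, and off-diagonal entries γ₂, where γ₀ > 0, γ₀ ≥ 2|γ₂|, and γ₀−γ₂+1 > 0. If x ∈ ℓ² satisfies Bx = 0, then x = 0. -/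
theorem stmt_12 (γ₀ γ₂ : ℝ) (h0 : 0 < γ₀) (h2 : 2 * |γ₂| ≤ γ₀) (h1 : 0 < γ₀ - γ₂ + 1)
    (x : ℕ → ℝ) (hl2 : Summable fun n => (x n) ^ 2)
    (heq1 : (γ₀ - γ₂ + 1) * x 1 + γ₂ * x 2 = 0)
    (heqn : ∀ n : ℕ, 2 ≤ n →
      γ₂ * x (n - 1) + (γ₀ + 2 * n - 1) * x n + γ₂ * x (n + 1) = 0) :
    ∀ n : ℕ, 1 ≤ n → x n = 0 := by
  by_contra h
  push_neg at h
  obtain ⟨k, hk1, hkne⟩ := h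
  -- |x n| → 0
  have htend : Filter.Tendsto (fun n => |x n|) Filter.atTop (nhds 0) := by
    have hsq := hl2.tendsto_atTop_zero
    have h2' : Filter.Tendsto (fun n => Real.sqrt ((x n) ^ 2)) Filter.atTop
        (nhds (Real.sqrt 0)) := (Real.continuous_sqrt.tendsto 0).comp hsq
    simpa [Real.sqrt_sq_eq_abs, Real.sqrt_zero] using h2'
  have hεpos : 0 < |x k| := abs_pos.mpr hkne
  have hev : ∀ᶠ n in Filter.atTop, |x n| < |x k| :=
    htend.eventually_lt_const hεpos
  obtain ⟨N, hN⟩ := Filter.eventually_atTop.mp hev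
  have hkN : k < N := by
    by_contra hc
    push_neg at hc
    exact absurd (hN k hc) (lt_irrefl _)
  have hkmem : k ∈ Finset.Icc 1 N := Finset.mem_Icc.mpr ⟨hk1, hkN.le⟩
  obtain ⟨m, hm, hmax⟩ := Finset.exists_max_image (Finset.Icc 1 N)
    (fun n => |x n|) ⟨k, hkmem⟩
  obtain ⟨hm1, hmN⟩ := Finset.mem_Icc.mp hm
  have hMk : |x k| ≤ |x m| := hmax k hkmem
  have hMpos : 0 < |x m| := lt_of_lt_of_le hεpos hMk
  have hglob : ∀ n : ℕ, 1 ≤ n → |x n| ≤ |x m| := by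
    intro n hn1
    by_cases hn : n ≤ N
    · exact hmax n (Finset.mem_Icc.mpr ⟨hn1, hn⟩)
    · push_neg at hn
      exact le_trans (hN n hn.le).le hMk
  have hγ : |γ₂| + 1 ≤ γ₀ - γ₂ + 1 := by
    have := le_abs_self γ₂
    linarith
  rcases eq_or_lt_of_le hm1 with hm1' | hm2
  · -- m = 1
    have hmeq : m = 1 := hm1'.symm
    subst hmeq
    have he : (γ₀ - γ₂ + 1) * x 1 = -(γ₂ * x 2) := by linarith
    have habs : (γ₀ - γ₂ + 1) * |x 1| = |γ₂| * |x 2| := by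
      have := congrArg abs he
      rwa [abs_neg, abs_mul, abs_mul, abs_of_pos h1] at this
    have h2le : |x 2| ≤ |x 1| := hglob 2 (by norm_num)
    nlinarith [abs_nonneg γ₂]
  · -- m ≥ 2
    have hm2' : 2 ≤ m := hm2
    have hmc : (2 : ℝ) ≤ (m : ℝ) := by exact_mod_cast hm2'
    have hdpos : 0 < γ₀ + 2 * (m : ℝ) - 1 := by linarith
    have he := heqn m hm2'
    have he' : (γ₀ + 2 * (m : ℝ) - 1) * x m = -(γ₂ * x (m - 1) + γ₂ * x (m + 1)) := by
      linarith
    have habs : (γ₀ + 2 * (m : ℝ) - 1) * |x m| ≤ |γ₂| * |x (m - 1)| + |γ₂| * |x (m + 1)| := by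
      have h3 : |(γ₀ + 2 * (m : ℝ) - 1) * x m| = (γ₀ + 2 * (m : ℝ) - 1) * |x m| := by
        rw [abs_mul, abs_of_pos hdpos]
      calc (γ₀ + 2 * (m : ℝ) - 1) * |x m| = |(γ₀ + 2 * (m : ℝ) - 1) * x m| := h3.symm
        _ = |γ₂ * x (m - 1) + γ₂ * x (m + 1)| := by rw [he', abs_neg]
        _ ≤ |γ₂ * x (m - 1)| + |γ₂ * x (m + 1)| := abs_add_le _ _
        _ = |γ₂| * |x (m - 1)| + |γ₂| * |x (m + 1)| := by rw [abs_mul, abs_mul]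
    have hp : |x (m - 1)| ≤ |x m| := hglob (m - 1) (by omega)
    have hq : |x (m + 1)| ≤ |x m| := hglob (m + 1) (by omega)
    nlinarith [abs_nonneg γ₂]
end

section
/- Let γ₀ > 0 and γ₂ ∈ ℝ. If a two-sided sequence (y_n)_{n∈ℤ} with y_{−n} = conj(y_n) satisfies γ₂ y_{n+2} + (γ₀ + |n|) y_n + γ₂ y_{n−2} = 0 for all even n ∈ ℤ, |γ₂| ≤ γ₀/2, and y_n → 0 as |n| → ∞, then y_n = 0 for all even n. -/
/-!
Restrict to the even indices, `z k = y (2k)`. The recurrence and `|γ₂| ≤ γ₀ / 2` give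
`(γ₀ + |k|) ‖z k‖ ≤ γ₀ / 2 (‖z (k + 1)‖ + ‖z (k - 1)‖)`, a discrete maximum principle: since
`z → 0`, a nonzero `z` attains its maximal norm, the inequality at a maximiser `k` forces `k = 0`,
and then at `0` the neighbours `±1` have strictly smaller norm, which contradicts the inequality.
-/

open Filter Topology

section MaximumPrinciple

variable {E : Type*} [SeminormedAddCommGroup E] {a : ℝ} {z : ℤ → E}

theorem eq_zero_of_forall_norm_le_of_norm_pos (ha : 0 ≤ a)
    (hrec : ∀ k : ℤ, (a + |(k : ℝ)|) * ‖z k‖ ≤ a / 2 * (‖z (k + 1)‖ + ‖z (k - 1)‖))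
    {k : ℤ} (hmax : ∀ j, ‖z j‖ ≤ ‖z k‖) (hpos : 0 < ‖z k‖) : k = 0 := by
  have hle : (a + |(k : ℝ)|) * ‖z k‖ ≤ a * ‖z k‖ :=
    (hrec k).trans (by nlinarith [hmax (k + 1), hmax (k - 1)])
  have habs : |(k : ℝ)| ≤ 0 := by nlinarith
  exact_mod_cast abs_nonpos_iff.1 habs

theorem norm_eq_zero_of_forall_norm_le (ha : 0 < a)
    (hrec : ∀ k : ℤ, (a + |(k : ℝ)|) * ‖z k‖ ≤ a / 2 * (‖z (k + 1)‖ + ‖z (k - 1)‖))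
    {k : ℤ} (hmax : ∀ j, ‖z j‖ ≤ ‖z k‖) : ‖z k‖ = 0 := by
  by_contra hne
  have hpos : 0 < ‖z k‖ := (norm_nonneg _).lt_of_ne' hne
  obtain rfl := eq_zero_of_forall_norm_le_of_norm_pos ha.le hrec hmax hpos
  have hlt : ∀ j ≠ 0, ‖z j‖ < ‖z 0‖ := fun j hj => (hmax j).lt_of_ne fun h =>
    hj (eq_zero_of_forall_norm_le_of_norm_pos ha.le hrec (h ▸ hmax) (h ▸ hpos))
  have h0 := hrec 0
  simp only [Int.cast_zero, abs_zero, add_zero, zero_add, zero_sub] at h0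
  nlinarith [hlt 1 one_ne_zero, hlt (-1) (by norm_num)]

end MaximumPrinciple

theorem eq_zero_of_tendsto_cofinite {E : Type*} [NormedAddCommGroup E] {a : ℝ} {z : ℤ → E}
    (ha : 0 < a)
    (hrec : ∀ k : ℤ, (a + |(k : ℝ)|) * ‖z k‖ ≤ a / 2 * (‖z (k + 1)‖ + ‖z (k - 1)‖))
    (hz : Tendsto z cofinite (𝓝 0)) : z = 0 := by
  funext k
  by_contra hk
  have hsmall : ∀ᶠ j in cocompact ℤ, ‖z j‖ ≤ ‖z k‖ := by
    rw [cocompact_eq_cofinite]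
    exact (tendsto_zero_iff_norm_tendsto_zero.1 hz).eventually (ge_mem_nhds (norm_pos_iff.2 hk))
  obtain ⟨k₀, hk₀⟩ :=
    (continuous_of_discreteTopology (f := fun j => ‖z j‖)).exists_forall_ge' k hsmall
  exact hk (norm_le_zero_iff.1 ((hk₀ k).trans (norm_eq_zero_of_forall_norm_le ha hrec hk₀).le))

theorem mul_norm_le_of_smul_add_smul_add_smul_eq_zero {E : Type*} [SeminormedAddCommGroup E]
    [NormedSpace ℝ E] {b c : ℝ} {u v w : E} (hc : 0 ≤ c) (h : b • u + c • v + b • w = 0) :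
    c * ‖v‖ ≤ |b| * (‖u‖ + ‖w‖) := by
  have hv : c • v = -(b • u + b • w) := by rw [← sub_eq_zero, sub_neg_eq_add, ← h]; abel
  calc c * ‖v‖ = ‖c • v‖ := by rw [norm_smul, Real.norm_of_nonneg hc]
    _ ≤ ‖b • u‖ + ‖b • w‖ := by rw [hv, norm_neg]; exact norm_add_le _ _
    _ = |b| * (‖u‖ + ‖w‖) := by rw [norm_smul, norm_smul, Real.norm_eq_abs, mul_add]

theorem stmt_13_general (γ₀ γ₂ : ℝ) (h0 : 0 < γ₀) (h2 : |γ₂| ≤ γ₀ / 2)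
    (y : ℤ → ℂ)
    (heq : ∀ n : ℤ, Even n →
      (γ₂ : ℂ) * y (n + 2) + ((γ₀ : ℂ) + (|n| : ℤ)) * y n + (γ₂ : ℂ) * y (n - 2) = 0)
    (hdecay : Filter.Tendsto y Filter.cofinite (nhds 0)) :
    ∀ n : ℤ, Even n → y n = 0 := by
  set z : ℤ → ℂ := fun k => y (k + k)
  have hz : Tendsto z cofinite (𝓝 0) :=
    hdecay.comp (Function.Injective.tendsto_cofinite fun i j h => by omega)
  have hrec (k : ℤ) :
      (γ₀ + |(k : ℝ)|) * ‖z k‖ ≤ γ₀ / 2 * (‖z (k + 1)‖ + ‖z (k - 1)‖) := by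
    have h := heq (k + k) ⟨k, rfl⟩
    rw [show k + k + 2 = k + 1 + (k + 1) by ring, show k + k - 2 = k - 1 + (k - 1) by ring] at h
    have h' : γ₂ • z (k + 1) + (γ₀ + ((|k + k| : ℤ) : ℝ)) • z k + γ₂ • z (k - 1) = 0 := by
      simp only [Complex.real_smul, Complex.ofReal_add, Complex.ofReal_intCast]
      exact h
    have hweight : γ₀ + |(k : ℝ)| ≤ γ₀ + ((|k + k| : ℤ) : ℝ) := by
      push_cast; rw [← two_mul, abs_mul, abs_two]; linarith [abs_nonneg (k : ℝ)]
    calc (γ₀ + |(k : ℝ)|) * ‖z k‖ ≤ (γ₀ + ((|k + k| : ℤ) : ℝ)) * ‖z k‖ := by gcongr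
      _ ≤ |γ₂| * (‖z (k + 1)‖ + ‖z (k - 1)‖) :=
          mul_norm_le_of_smul_add_smul_add_smul_eq_zero (by positivity) h'
      _ ≤ γ₀ / 2 * (‖z (k + 1)‖ + ‖z (k - 1)‖) := by gcongr
  rintro n ⟨k, rfl⟩
  exact congrFun (eq_zero_of_tendsto_cofinite h0 hrec hz) k

theorem stmt_13 (γ₀ γ₂ : ℝ) (h0 : 0 < γ₀) (h2 : |γ₂| ≤ γ₀ / 2)
    (y : ℤ → ℂ) (hconj : ∀ n : ℤ, y (-n) = starRingEnd ℂ (y n))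
    (heq : ∀ n : ℤ, Even n →
      (γ₂ : ℂ) * y (n + 2) + ((γ₀ : ℂ) + (|n| : ℤ)) * y n + (γ₂ : ℂ) * y (n - 2) = 0)
    (hdecay : Filter.Tendsto y Filter.cofinite (nhds 0)) :
    ∀ n : ℤ, Even n → y n = 0 :=
  stmt_13_general γ₀ γ₂ h0 h2 y heq hdecay
end

section
/- Let a, b > 0 and set β(θ) = ((a+b)/(2a) + (a+b)/(2b) − 1 + ((a+b)/a − (a+b)/b)cos2θ). Then β(θ) ≥ 0 for all θ if and only if (a−b)/(a+b) ≤ 2 − √3 (assuming a ≥ b). -/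
theorem stmt_17 (a b : ℝ) (ha : 0 < a) (hb : 0 < b) (hab : b ≤ a) :
    (∀ θ : ℝ, 0 ≤ (a + b) / (2 * a) + (a + b) / (2 * b) - 1 +
        ((a + b) / a - (a + b) / b) * Real.cos (2 * θ)) ↔
      (a - b) / (a + b) ≤ 2 - Real.sqrt 3 := by
  have hs3 : Real.sqrt 3 * Real.sqrt 3 = 3 := Real.mul_self_sqrt (by norm_num)
  have hs3n : 0 ≤ Real.sqrt 3 := Real.sqrt_nonneg 3
  have hs1 : 1 ≤ Real.sqrt 3 := by nlinarith
  have habpos : 0 < a + b := by linarith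
  have hX : (a + b) / (2 * a) + (a + b) / (2 * b) - 1 +
      ((a + b) / a - (a + b) / b) = (3 * b ^ 2 - a ^ 2) / (2 * a * b) := by
    field_simp
    ring
  constructor
  · intro h
    have h0 := h 0
    rw [mul_zero, Real.cos_zero, mul_one, hX] at h0
    have hnum : 0 ≤ 3 * b ^ 2 - a ^ 2 := by
      have hd : 0 < 2 * a * b := by positivity
      rw [le_div_iff₀ hd] at h0
      linarith
    have key : a ≤ Real.sqrt 3 * b := by
      nlinarith [hnum, (by positivity : (0:ℝ) < a + Real.sqrt 3 * b), hs3]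
    rw [div_le_iff₀ habpos]
    nlinarith [mul_nonneg (by linarith : (0:ℝ) ≤ Real.sqrt 3 - 1)
      (by linarith : (0:ℝ) ≤ Real.sqrt 3 * b - a)]
  · intro hle θ
    rw [div_le_iff₀ habpos] at hle
    have key : a ≤ Real.sqrt 3 * b := by
      nlinarith [mul_nonneg (by linarith : (0:ℝ) ≤ Real.sqrt 3 + 1)
        (by nlinarith : (0:ℝ) ≤ a + 3 * b - Real.sqrt 3 * (a + b))]
    have hnum : 0 ≤ 3 * b ^ 2 - a ^ 2 := by
      nlinarith [mul_le_mul key key ha.le (by positivity : (0:ℝ) ≤ Real.sqrt 3 * b)]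
    have hX0 : 0 ≤ (a + b) / (2 * a) + (a + b) / (2 * b) - 1 +
        ((a + b) / a - (a + b) / b) := by
      rw [hX]; positivity
    have hγ : (a + b) / a - (a + b) / b ≤ 0 := by
      rw [sub_nonpos]
      gcongr
    have hc : Real.cos (2 * θ) ≤ 1 := Real.cos_le_one _
    nlinarith [mul_nonneg (neg_nonneg.mpr hγ) (sub_nonneg.mpr hc)]
end
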